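/- arXiv:1912.01449 — 3 statements merged into one kernel-verified Lean document; each statement's English description precedes it below -/
import Mathlib

section
/- Let a, b ∈ ℝ^d be unit vectors with aᵀb = 0. Let S be any subset of the coordinates {1,…,d}, let b⁺ be the vector obtained from b by zeroing all coordinates outside S, and assume b⁺ ≠ 0. Then |aᵀb⁺| ≤ ‖b⁺‖ · √(1 − ‖b⁺‖²). -/
open RealInnerProductSpace

/-- Orthogonality measure after coordinate truncation (Lemma 3.1):
if `a, b` are unit orthogonal vectors and `bp` is `b` truncated to a coordinate set `S`,
then `⟨a, bp⟩ = 1 - |aᵀbp|/(‖a‖‖bp‖) ≥ 1 - √(1 - ‖bp‖²)`. -/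
theorem stmt0 (d : ℕ) (a b : EuclideanSpace ℝ (Fin d))
    (ha : ‖a‖ = 1) (hb : ‖b‖ = 1) (hab : ⟪a, b⟫ = 0)
    (S : Finset (Fin d)) (bp : EuclideanSpace ℝ (Fin d))
    (hbp : ∀ i, bp i = if i ∈ S then b i else 0)
    (hne : bp ≠ 0) :
    1 - Real.sqrt (1 - ‖bp‖ ^ 2) ≤ 1 - |⟪a, bp⟫| / (‖a‖ * ‖bp‖) := by
  set ap : EuclideanSpace ℝ (Fin d) := WithLp.toLp 2 (fun i => if i ∈ S then a i else 0) with hap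
  set am : EuclideanSpace ℝ (Fin d) := a - ap with ham
  set bm : EuclideanSpace ℝ (Fin d) := b - bp with hbm
  have hbppos : 0 < ‖bp‖ := norm_pos_iff.mpr hne
  have h1 : ⟪a, bp⟫ = ⟪ap, bp⟫ := by
    simp only [PiLp.inner_apply, RCLike.inner_apply, conj_trivial]
    refine Finset.sum_congr rfl fun i _ => ?_
    by_cases h : i ∈ S <;> simp [hap, hbp i, h]
  have h2 : ⟪ap, bm⟫ = 0 := by
    simp only [PiLp.inner_apply, RCLike.inner_apply, conj_trivial]
    refine Finset.sum_eq_zero fun i _ => ?_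
    by_cases h : i ∈ S <;> simp [hap, hbm, hbp i, h, PiLp.sub_apply]
  have h3 : ⟪ap, am⟫ = 0 := by
    simp only [PiLp.inner_apply, RCLike.inner_apply, conj_trivial]
    refine Finset.sum_eq_zero fun i _ => ?_
    by_cases h : i ∈ S <;> simp [hap, ham, h, PiLp.sub_apply]
  have h4 : ⟪bp, bm⟫ = 0 := by
    simp only [PiLp.inner_apply, RCLike.inner_apply, conj_trivial]
    refine Finset.sum_eq_zero fun i _ => ?_
    by_cases h : i ∈ S <;> simp [hbm, hbp i, h, PiLp.sub_apply]
  have hasum : a = ap + am := by rw [ham]; simp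
  have hbsum : b = bp + bm := by rw [hbm]; simp
  have hpa : ‖ap‖ ^ 2 + ‖am‖ ^ 2 = 1 := by
    have := norm_add_sq_real ap am
    rw [← hasum, ha, h3] at this
    nlinarith [this]
  have hpb : ‖bp‖ ^ 2 + ‖bm‖ ^ 2 = 1 := by
    have := norm_add_sq_real bp bm
    rw [← hbsum, hb, h4] at this
    nlinarith [this]
  have hbmsq : ‖bm‖ ^ 2 = 1 - ‖bp‖ ^ 2 := by linarith
  have hbmeq : ‖bm‖ = Real.sqrt (1 - ‖bp‖ ^ 2) := by
    rw [← hbmsq, Real.sqrt_sq (norm_nonneg _)]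
  have hinner : ⟪a, bp⟫ = -⟪am, bm⟫ := by
    have hsplit : ⟪a, b⟫ = ⟪a, bp⟫ + ⟪a, bm⟫ := by
      rw [hbsum]; exact inner_add_right _ _ _
    have h5 : ⟪a, bm⟫ = ⟪ap, bm⟫ + ⟪am, bm⟫ := by
      rw [hasum]; exact inner_add_left _ _ _
    rw [hab, h5, h2] at hsplit
    linarith
  -- key bound
  have key : |⟪a, bp⟫| ≤ ‖bp‖ * Real.sqrt (1 - ‖bp‖ ^ 2) := by
    by_cases hcase : ‖ap‖ ^ 2 ≤ 1 - ‖bp‖ ^ 2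
    · have h6 : ‖ap‖ ≤ Real.sqrt (1 - ‖bp‖ ^ 2) := by
        rw [← Real.sqrt_sq (norm_nonneg ap)]
        exact Real.sqrt_le_sqrt hcase
      calc |⟪a, bp⟫| = |⟪ap, bp⟫| := by rw [h1]
        _ ≤ ‖ap‖ * ‖bp‖ := abs_real_inner_le_norm _ _
        _ ≤ Real.sqrt (1 - ‖bp‖ ^ 2) * ‖bp‖ :=
            mul_le_mul_of_nonneg_right h6 (norm_nonneg _)
        _ = ‖bp‖ * Real.sqrt (1 - ‖bp‖ ^ 2) := mul_comm _ _
    · push_neg at hcase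
      have h7 : ‖am‖ ^ 2 ≤ ‖bp‖ ^ 2 := by linarith
      have h8 : ‖am‖ ≤ ‖bp‖ := by
        nlinarith [norm_nonneg am, norm_nonneg bp]
      calc |⟪a, bp⟫| = |⟪am, bm⟫| := by rw [hinner, abs_neg]
        _ ≤ ‖am‖ * ‖bm‖ := abs_real_inner_le_norm _ _
        _ ≤ ‖bp‖ * ‖bm‖ := mul_le_mul_of_nonneg_right h8 (norm_nonneg _)
        _ = ‖bp‖ * Real.sqrt (1 - ‖bp‖ ^ 2) := by rw [hbmeq]
  have hdiv : |⟪a, bp⟫| / (‖a‖ * ‖bp‖) ≤ Real.sqrt (1 - ‖bp‖ ^ 2) := by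
    rw [ha, one_mul, div_le_iff₀ hbppos, mul_comm]
    exact key
  linarith
end

section
/- Let a, b ∈ ℝ^d be unit vectors with aᵀb = 0, and let 0 < κ_S < d be an integer. Let T be a set of exactly κ_S coordinate indices such that |b_j| ≤ |b_i| for every j ∈ T and i ∉ T (T consists of κ_S entries of b of smallest absolute value), let b⁺ be the vector obtained from b by zeroing all coordinates in T, and assume b⁺ ≠ 0. Then |aᵀb⁺| ≤ ‖b⁺‖ · √(κ_S / d). -/
set_option maxHeartbeats 800000


open RealInnerProductSpace

/-- Truncation by sparsity: zeroing the `κS` smallest-magnitude entries of a unit vector `b`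
orthogonal to a unit vector `a` yields `⟨a, b⁺⟩ ≥ 1 - √(κS/d)`. -/
theorem stmt1 (d : ℕ) (a b : EuclideanSpace ℝ (Fin d))
    (ha : ‖a‖ = 1) (hb : ‖b‖ = 1) (hab : ⟪a, b⟫ = 0)
    (κS : ℕ) (hκ0 : 0 < κS) (hκd : κS < d)
    (T : Finset (Fin d)) (hT : T.card = κS)
    (hsmall : ∀ j ∈ T, ∀ i ∉ T, |b j| ≤ |b i|)
    (bp : EuclideanSpace ℝ (Fin d))
    (hbp : ∀ i, bp i = if i ∈ T then 0 else b i)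
    (hne : bp ≠ 0) :
    1 - Real.sqrt ((κS : ℝ) / d) ≤ 1 - |⟪a, bp⟫| / (‖a‖ * ‖bp‖) := by
  classical
  have hd0 : (0:ℝ) < (d:ℝ) := by exact_mod_cast hκ0.trans hκd
  -- inner products as sums
  have hinnerab : (⟪a, b⟫ : ℝ) = ∑ i, a i * b i := by
    simp [PiLp.inner_apply, RCLike.inner_apply, mul_comm]
  have hinnerabp : (⟪a, bp⟫ : ℝ) = ∑ i, a i * bp i := by
    simp [PiLp.inner_apply, RCLike.inner_apply, mul_comm]
  set X : ℝ := ⟪a, bp⟫ with hX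
  set t : ℝ := ∑ j ∈ T, (b j)^2 with ht
  set AT : ℝ := ∑ j ∈ T, (a j)^2 with hAT
  set AC : ℝ := ∑ j ∈ Tᶜ, (a j)^2 with hAC
  have hsplitb : ∑ j ∈ T, (b j)^2 + ∑ j ∈ Tᶜ, (b j)^2 = ∑ i, (b i)^2 :=
    Finset.sum_add_sum_compl T _
  have hsplita : AT + AC = ∑ i, (a i)^2 := Finset.sum_add_sum_compl T _
  have hnormsq : ∀ v : EuclideanSpace ℝ (Fin d), ‖v‖^2 = ∑ i, (v i)^2 := by
    intro v
    rw [EuclideanSpace.norm_eq, Real.sq_sqrt (by positivity)]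
    simp [sq_abs]
  have hbsum : ∑ i, (b i)^2 = 1 := by rw [← hnormsq, hb]; norm_num
  have hasum : ∑ i, (a i)^2 = 1 := by rw [← hnormsq, ha]; norm_num
  -- bp norm squared
  have hbpnorm : ‖bp‖^2 = 1 - t := by
    rw [hnormsq]
    have : ∑ i, (bp i)^2 = ∑ i ∈ Tᶜ, (b i)^2 := by
      rw [← Finset.sum_add_sum_compl T (fun i => (bp i)^2)]
      have h1 : ∑ j ∈ T, (bp j)^2 = 0 := by
        apply Finset.sum_eq_zero; intro j hj; rw [hbp j, if_pos hj]; ring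
      have h2 : ∑ j ∈ Tᶜ, (bp j)^2 = ∑ j ∈ Tᶜ, (b j)^2 := by
        apply Finset.sum_congr rfl; intro j hj
        rw [hbp j, if_neg (Finset.mem_compl.mp hj)]
      rw [h1, h2, zero_add]
    rw [this]
    have := hsplitb
    rw [hbsum] at this
    linarith
  have hbppos : 0 < ‖bp‖ := norm_pos_iff.mpr hne
  have ht0 : 0 ≤ t := Finset.sum_nonneg fun _ _ => sq_nonneg _
  have ht1 : t ≤ 1 := by
    have h2 : (0:ℝ) ≤ ∑ j ∈ Tᶜ, (b j)^2 := Finset.sum_nonneg fun _ _ => sq_nonneg _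
    rw [hbsum] at hsplitb; linarith
  -- X as sum over Tᶜ
  have hXC : X = ∑ i ∈ Tᶜ, a i * b i := by
    rw [hinnerabp, ← Finset.sum_add_sum_compl T (fun i => a i * bp i)]
    have h1 : ∑ j ∈ T, a j * bp j = 0 := by
      apply Finset.sum_eq_zero; intro j hj; rw [hbp j, if_pos hj]; ring
    have h2 : ∑ j ∈ Tᶜ, a j * bp j = ∑ j ∈ Tᶜ, a j * b j := by
      apply Finset.sum_congr rfl; intro j hj
      rw [hbp j, if_neg (Finset.mem_compl.mp hj)]
    rw [h1, h2, zero_add]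
  have hXT : ∑ i ∈ T, a i * b i = -X := by
    have := Finset.sum_add_sum_compl T (fun i => a i * b i)
    rw [← hinnerab, hab] at this
    rw [← hXC] at this
    linarith
  -- Cauchy-Schwarz on both parts
  have hcs1 : X^2 ≤ AT * t := by
    have h := Finset.sum_mul_sq_le_sq_mul_sq T (fun i => a i) (fun i => b i)
    calc X^2 = (∑ i ∈ T, a i * b i)^2 := by rw [hXT]; ring
      _ ≤ AT * t := h
  have hcs2 : X^2 ≤ AC * (1 - t) := by
    have h := Finset.sum_mul_sq_le_sq_mul_sq Tᶜ (fun i => a i) (fun i => b i)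
    have hbc : ∑ j ∈ Tᶜ, (b j)^2 = 1 - t := by
      rw [hbsum] at hsplitb; linarith
    calc X^2 = (∑ i ∈ Tᶜ, a i * b i)^2 := by rw [hXC]
      _ ≤ AC * (1 - t) := by rw [← hbc]; exact h
  have hATAC : AT + AC = 1 := by rw [hsplita, hasum]
  -- combine: X^2 ≤ t(1-t)
  have hkey : X^2 ≤ t * (1 - t) := by
    have h1 : (1 - t) * X^2 ≤ (1 - t) * (AT * t) :=
      mul_le_mul_of_nonneg_left hcs1 (by linarith)
    have h2 : t * X^2 ≤ t * (AC * (1 - t)) := mul_le_mul_of_nonneg_left hcs2 ht0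
    nlinarith
  -- t ≤ κS/d
  have hcardC : (Tᶜ.card : ℝ) = (d:ℝ) - κS := by
    rw [Finset.card_compl, hT]
    simp
    rw [Nat.cast_sub hκd.le]
  have htled : t ≤ (κS:ℝ) / d := by
    have hstep : ∀ j ∈ T, ((d:ℝ) - κS) * (b j)^2 ≤ 1 - t := by
      intro j hj
      have hle : ∀ i ∈ Tᶜ, (b j)^2 ≤ (b i)^2 := by
        intro i hi
        have := hsmall j hj i (Finset.mem_compl.mp hi)
        nlinarith [abs_nonneg (b j), abs_nonneg (b i), sq_abs (b j), sq_abs (b i)]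
      have : ∑ _i ∈ Tᶜ, (b j)^2 ≤ ∑ i ∈ Tᶜ, (b i)^2 := Finset.sum_le_sum hle
      rw [Finset.sum_const, nsmul_eq_mul] at this
      have hbc : ∑ i ∈ Tᶜ, (b i)^2 = 1 - t := by
        rw [hbsum] at hsplitb; linarith
      rw [hbc] at this
      rw [← hcardC]
      exact this
    have hsumT : ((d:ℝ) - κS) * t ≤ (κS:ℝ) * (1 - t) := by
      have := Finset.sum_le_sum hstep
      rw [← Finset.mul_sum, Finset.sum_const, nsmul_eq_mul, hT] at this
      exact this
    rw [le_div_iff₀ hd0]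
    nlinarith
  -- finish
  have hXbound : |X| ≤ Real.sqrt ((κS:ℝ)/d) * ‖bp‖ := by
    have h1 : X^2 ≤ ((κS:ℝ)/d) * ‖bp‖^2 := by
      rw [hbpnorm]
      nlinarith [hkey, htled, ht1, mul_le_mul_of_nonneg_right htled (by linarith : (0:ℝ) ≤ 1 - t)]
    have := Real.sqrt_le_sqrt h1
    rw [Real.sqrt_sq_eq_abs] at this
    calc |X| ≤ Real.sqrt (((κS:ℝ)/d) * ‖bp‖^2) := this
      _ = Real.sqrt ((κS:ℝ)/d) * ‖bp‖ := by
          rw [Real.sqrt_mul (by positivity), Real.sqrt_sq hbppos.le]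
  have : |X| / (‖a‖ * ‖bp‖) ≤ Real.sqrt ((κS:ℝ)/d) := by
    rw [ha, one_mul, div_le_iff₀ hbppos]
    exact hXbound
  linarith
end

section
/- Let a, b ∈ ℝ^d be unit vectors with aᵀb = 0, and let κ_H > 0. Let b⁺ be the vector obtained from b by zeroing every coordinate i with |b_i| < κ_H (hard-thresholding at level κ_H), let k = ‖b⁺‖₀ be the number of nonzero entries of b⁺, and assume b⁺ ≠ 0. Then k · κ_H² ≤ 1 and |aᵀb⁺| ≤ ‖b⁺‖ · √(1 − k · κ_H²). -/
open RealInnerProductSpace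

/-- Hard-thresholding: if `b⁺` is the hard-thresholding of a unit vector `b`
orthogonal to a unit vector `a`, and `k = ‖b⁺‖₀`, then `k κH² ≤ 1` and
`⟨a, b⁺⟩ ≥ 1 - √(1 - k κH²)`. -/
theorem stmt3 (d : ℕ) (a b : EuclideanSpace ℝ (Fin d))
    (ha : ‖a‖ = 1) (hb : ‖b‖ = 1) (hab : ⟪a, b⟫ = 0)
    (κH : ℝ) (hκ : 0 < κH)
    (bp : EuclideanSpace ℝ (Fin d))
    (hbp : ∀ i, bp i = if |b i| < κH then 0 else b i)
    (k : ℕ) (hk : k = (Finset.univ.filter (fun i => bp i ≠ 0)).card)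
    (hne : bp ≠ 0) :
    (k : ℝ) * κH ^ 2 ≤ 1 ∧
      1 - Real.sqrt (1 - (k : ℝ) * κH ^ 2) ≤ 1 - |⟪a, bp⟫| / (‖a‖ * ‖bp‖) := by
  classical
  set S : Finset (Fin d) := Finset.univ.filter (fun i => bp i ≠ 0) with hS
  -- basic pointwise facts
  have hmem : ∀ i ∈ S, bp i = b i ∧ κH ≤ |b i| := by
    intro i hi
    have hi' : bp i ≠ 0 := (Finset.mem_filter.mp hi).2
    have h := hbp i
    by_cases hlt : |b i| < κH
    · rw [if_pos hlt] at h; exact absurd h hi'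
    · rw [if_neg hlt] at h; exact ⟨h, le_of_not_gt hlt⟩
  have hzero : ∀ i ∉ S, bp i = 0 := by
    intro i hi
    by_contra h
    exact hi (Finset.mem_filter.mpr ⟨Finset.mem_univ i, h⟩)
  have hinner : ∀ x y : EuclideanSpace ℝ (Fin d), ⟪x, y⟫ = ∑ i, x i * y i := by
    intro x y
    simp [PiLp.inner_apply, RCLike.inner_apply, mul_comm]
  -- sums of squares equal 1
  have ha2 : ∑ i, (a i) ^ 2 = 1 := by
    have h := real_inner_self_eq_norm_sq a
    rw [hinner, ha] at h
    simpa [sq] using h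
  have hb2 : ∑ i, (b i) ^ 2 = 1 := by
    have h := real_inner_self_eq_norm_sq b
    rw [hinner, hb] at h
    simpa [sq] using h
  have hab' : ∑ i, a i * b i = 0 := by rw [← hinner]; exact hab
  set A : ℝ := ∑ i ∈ S, (a i) ^ 2 with hA
  set s : ℝ := ∑ i ∈ S, (b i) ^ 2 with hs
  set t : ℝ := ∑ i ∈ S, a i * b i with ht
  -- complement sums
  have hAc : ∑ i ∈ Sᶜ, (a i) ^ 2 = 1 - A := by
    have := Finset.sum_add_sum_compl S (fun i => (a i) ^ 2)
    rw [ha2] at this; linarith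
  have hsc : ∑ i ∈ Sᶜ, (b i) ^ 2 = 1 - s := by
    have := Finset.sum_add_sum_compl S (fun i => (b i) ^ 2)
    rw [hb2] at this; linarith
  have htc : ∑ i ∈ Sᶜ, a i * b i = -t := by
    have := Finset.sum_add_sum_compl S (fun i => a i * b i)
    rw [hab'] at this; linarith
  -- Cauchy-Schwarz bounds
  have hcs1 : t ^ 2 ≤ A * s := Finset.sum_mul_sq_le_sq_mul_sq S a b
  have hcs2 : t ^ 2 ≤ (1 - A) * (1 - s) := by
    have h := Finset.sum_mul_sq_le_sq_mul_sq Sᶜ a b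
    rw [hAc, hsc, htc] at h
    calc t ^ 2 = (-t) ^ 2 := by ring
    _ ≤ (1 - A) * (1 - s) := h
  -- basic bounds on A, s
  have hA0 : 0 ≤ A := Finset.sum_nonneg fun i _ => sq_nonneg _
  have hA1 : A ≤ 1 := by
    rw [← ha2]
    exact Finset.sum_le_sum_of_subset_of_nonneg (Finset.subset_univ S)
      (fun i _ _ => sq_nonneg _)
  have hs1 : s ≤ 1 := by
    rw [← hb2]
    exact Finset.sum_le_sum_of_subset_of_nonneg (Finset.subset_univ S)
      (fun i _ _ => sq_nonneg _)
  have hks : (k : ℝ) * κH ^ 2 ≤ s := by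
    have : ∀ i ∈ S, κH ^ 2 ≤ (b i) ^ 2 := by
      intro i hi
      have h := (hmem i hi).2
      calc κH ^ 2 = |κH| ^ 2 := by rw [abs_of_pos hκ]
      _ ≤ |b i| ^ 2 := by
          apply sq_le_sq' <;> [linarith [abs_nonneg (b i), (abs_nonneg κH)]; skip]
          · rw [abs_of_pos hκ]; exact h
      _ = (b i) ^ 2 := sq_abs _
    calc (k : ℝ) * κH ^ 2 = ∑ _i ∈ S, κH ^ 2 := by
          rw [Finset.sum_const, hk]; push_cast; ring
    _ ≤ s := Finset.sum_le_sum this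
  have hkk : (k : ℝ) * κH ^ 2 ≤ 1 := le_trans hks hs1
  refine ⟨hkk, ?_⟩
  -- key quadratic bound
  have hkey : t ^ 2 ≤ s * (1 - (k : ℝ) * κH ^ 2) := by
    by_cases hAcase : A ≤ 1 - (k : ℝ) * κH ^ 2
    · have hs0 : 0 ≤ s := Finset.sum_nonneg fun i _ => sq_nonneg _
      calc t ^ 2 ≤ A * s := hcs1
      _ ≤ (1 - (k : ℝ) * κH ^ 2) * s := by nlinarith
      _ = s * (1 - (k : ℝ) * κH ^ 2) := by ring
    · push_neg at hAcase
      have h1 : 1 - A ≤ (k : ℝ) * κH ^ 2 := by linarith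
      calc t ^ 2 ≤ (1 - A) * (1 - s) := hcs2
      _ ≤ s * (1 - (k : ℝ) * κH ^ 2) := by nlinarith
  -- norms and inner product of bp
  have hbps : ‖bp‖ ^ 2 = s := by
    have h := real_inner_self_eq_norm_sq bp
    rw [hinner] at h
    have : ∑ i, bp i * bp i = s := by
      rw [← Finset.sum_add_sum_compl S (fun i => bp i * bp i)]
      have h1 : ∑ i ∈ S, bp i * bp i = s := by
        apply Finset.sum_congr rfl
        intro i hi; rw [(hmem i hi).1, sq]
      have h2 : ∑ i ∈ Sᶜ, bp i * bp i = 0 := by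
        apply Finset.sum_eq_zero
        intro i hi; rw [hzero i (Finset.mem_compl.mp hi)]; ring
      rw [h1, h2, add_zero]
    rw [this] at h; linarith
  have habp : ⟪a, bp⟫ = t := by
    rw [hinner]
    rw [← Finset.sum_add_sum_compl S (fun i => a i * bp i)]
    have h1 : ∑ i ∈ S, a i * bp i = t := by
      apply Finset.sum_congr rfl
      intro i hi; rw [(hmem i hi).1]
    have h2 : ∑ i ∈ Sᶜ, a i * bp i = 0 := by
      apply Finset.sum_eq_zero
      intro i hi; rw [hzero i (Finset.mem_compl.mp hi)]; ring
    rw [h1, h2, add_zero]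
  have hbpnorm_pos : 0 < ‖bp‖ := norm_pos_iff.mpr hne
  have hbpnorm : ‖bp‖ = Real.sqrt s := by
    rw [← hbps, Real.sqrt_sq hbpnorm_pos.le]
  -- final inequality
  have hfinal : |t| / ‖bp‖ ≤ Real.sqrt (1 - (k : ℝ) * κH ^ 2) := by
    rw [div_le_iff₀ hbpnorm_pos, hbpnorm]
    have : |t| = Real.sqrt (t ^ 2) := (Real.sqrt_sq_eq_abs t).symm
    rw [this]
    calc Real.sqrt (t ^ 2) ≤ Real.sqrt (s * (1 - (k : ℝ) * κH ^ 2)) :=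
          Real.sqrt_le_sqrt hkey
    _ = Real.sqrt s * Real.sqrt (1 - (k : ℝ) * κH ^ 2) := Real.sqrt_mul
          (Finset.sum_nonneg fun i _ => sq_nonneg _) _
    _ = Real.sqrt (1 - (k : ℝ) * κH ^ 2) * Real.sqrt s := mul_comm _ _
  rw [habp, ha, one_mul]
  linarith
end
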